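/- The adjoint operator ad_1 (where 1 = x^{0,0} ∈ B) is a semisimple operator on B, i.e. B is spanned by eigenvectors of ad_1, if and only if J₄ = {0}. -/

import Mathlib

/-!
Since `∂_p 1 = 0`, `ad_1 = ∂₄`, and `∂₄ u = [1, u]` lies in `B` for every `u ∈ A`.
If `J₄ = {0}`, `∂₄` is diagonal on the monomials, and each eigencomponent of `v ∈ B` is a
Lagrange interpolation polynomial in `∂₄` applied to `v`, hence lies in `B`.
If `J₄ = ℕ`, comparing coefficients of `∂₄ v = c v` at a monomial of `v` with maximal `i₄` and at
the monomial just below it shows that eigenvectors have no monomial with `i₄ ≠ 0`, whereas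
`∂₄ x^{0,2·1₄} = 2 x^{0,1₄}` lies in `B`.
-/

namespace SuBlock

variable (F : Type*) [Field F]

def sigmaV : Fin 4 → F := ![1, 0, 1, 0]

def deltaV (d : F) : Fin 4 → F := ![0, 0, d, 0]

/-- The data `(Γ, J, δ)` of the paper: `δ₃ ∈ F \ {0}`, `Γ ≤ F⁴` an additive subgroup
containing `σ = (1,0,1,0)` and `δ = (0,0,δ₃,0)`, with `ker π₄ ⊄ ker π₂` whenever `π₂ ≠ 0`,
and `J_p` encoded by `m p : Bool` (`J_p = ℕ` iff `m p = true`), with `J_q ≠ {0}`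
whenever `π_q = 0`, for `q = 2,4`.  (Coordinates `1,2,3,4` are `Fin 4` indices `0,1,2,3`.) -/
structure Datum where
  d3 : F
  d3_ne : d3 ≠ 0
  Γ : AddSubgroup (Fin 4 → F)
  m : Fin 4 → Bool
  sigma_mem : sigmaV F ∈ Γ
  delta_mem : deltaV F d3 ∈ Γ
  ker_cond : (∃ α ∈ Γ, α 1 ≠ 0) → ∃ α ∈ Γ, α 3 = 0 ∧ α 1 ≠ 0
  J2_cond : (∀ α ∈ Γ, α 1 = 0) → m 1 = true
  J4_cond : (∀ α ∈ Γ, α 3 = 0) → m 3 = true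

variable {F}

/-- The monoid `J = J₁ × J₂ × J₃ × J₄ ⊆ ℕ⁴`, where `J_p = ℕ` if `m p = true` and
`J_p = {0}` otherwise. -/
def Jmon (m : Fin 4 → Bool) : AddSubmonoid (Fin 4 → ℕ) where
  carrier := {i | ∀ p, m p = false → i p = 0}
  zero_mem' := fun p _ => rfl
  add_mem' := fun ha hb p hp => by
    simp only [Set.mem_setOf_eq] at ha hb
    simp [Pi.add_apply, ha p hp, hb p hp]

/-- The commutative associative algebra `A = A(Γ,J)`, the semigroup algebra of `Γ × J`
with basis `x^{α,i}`, `(α,i) ∈ Γ × J`. -/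
abbrev Alg (D : Datum F) : Type _ := AddMonoidAlgebra F (↥D.Γ × ↥(Jmon D.m))

/-- The basis element `x^{α,i}`. -/
noncomputable def X (D : Datum F) (g : ↥D.Γ × ↥(Jmon D.m)) : Alg D :=
  AddMonoidAlgebra.single g 1

/-- `i - 1_[p]` (truncated subtraction). -/
def subE {m : Fin 4 → Bool} (i : ↥(Jmon m)) (p : Fin 4) : ↥(Jmon m) :=
  ⟨i.1 - Pi.single p 1, fun q hq => by
    have h : i.1 q = 0 := i.2 q hq
    simp only [Pi.sub_apply, h, Nat.zero_sub]⟩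

/-- `∂_p x^{α,i} = α_p x^{α,i} + i_p x^{α,i-1_[p]}` (coordinates are `Fin 4` indexed). -/
noncomputable def Dmon (D : Datum F) (p : Fin 4) (g : ↥D.Γ × ↥(Jmon D.m)) : Alg D :=
  (g.1.1 p) • X D g + ((g.2.1 p : F)) • X D (g.1, subE g.2 p)

/-- The derivation `∂_p` of `A`, extended linearly from its values on the basis. -/
noncomputable def Dop (D : Datum F) (p : Fin 4) (u : Alg D) : Alg D :=
  Finsupp.sum u.coeff fun g c => c • Dmon D p g

/-- The Lie bracket (1.6):
`[u,v] = x^{σ,0}(∂₁(u)∂₂(v) − ∂₁(v)∂₂(u)) + (x^{δ,0}∂₃(u) + u)∂₄(v) − ∂₄(u)(x^{δ,0}∂₃(v) + v)`. -/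
noncomputable def br (D : Datum F) (u v : Alg D) : Alg D :=
  X D (⟨sigmaV F, D.sigma_mem⟩, 0) * (Dop D 0 u * Dop D 1 v - Dop D 0 v * Dop D 1 u)
    + (X D (⟨deltaV F D.d3, D.delta_mem⟩, 0) * Dop D 2 u + u) * Dop D 3 v
    - Dop D 3 u * (X D (⟨deltaV F D.d3, D.delta_mem⟩, 0) * Dop D 2 v + v)

/-- The derived subalgebra `B = [A,A]`, the span of all brackets. -/
noncomputable def Bspan (D : Datum F) : Submodule F (Alg D) :=
  Submodule.span F {w | ∃ u v : Alg D, w = br D u v}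

open Polynomial

theorem le_span_eigenvectors_of_iSup_eigenspace_eq_top {K V : Type*} [Field K]
    [AddCommGroup V] [Module K V] {f : Module.End K V} {p : Submodule K V}
    (hp : ∀ x ∈ p, f x ∈ p) (hf : ⨆ μ, f.eigenspace μ = ⊤) :
    p ≤ Submodule.span K {w | w ∈ p ∧ ∃ c : K, f w = c • w} := by
  classical
  intro v hv
  obtain ⟨m, hm, rfl⟩ :=
    (Submodule.mem_iSup_iff_exists_finsupp _ _).mp
      (hf ▸ Submodule.mem_top : v ∈ ⨆ μ, f.eigenspace μ)
  have hcomp : ∀ μ ∈ m.support,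
      aeval f (Lagrange.basis m.support id μ) (m.sum fun _ x => x) = m μ := by
    intro μ hμ
    rw [map_finsuppSum, Finsupp.sum_congr (g2 := fun ν _ => if ν = μ then m μ else 0),
      Finsupp.sum_ite_eq', if_pos hμ]
    intro ν hν
    rw [Module.End.aeval_apply_of_hasEigenvector ⟨hm ν, Finsupp.mem_support_iff.mp hν⟩]
    rcases eq_or_ne ν μ with rfl | hne
    · have h1 : (Lagrange.basis m.support id ν).eval ν = 1 :=
        Lagrange.eval_basis_self (Set.injOn_id _) hν
      rw [if_pos rfl, h1, one_smul]
    · have h0 : (Lagrange.basis m.support id μ).eval ν = 0 :=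
        Lagrange.eval_basis_of_ne (v := id) hne.symm hν
      rw [if_neg hne, h0, zero_smul]
  refine Submodule.sum_mem _ fun μ hμ => Submodule.subset_span ⟨?_, μ, ?_⟩
  · rw [← hcomp μ hμ]
    exact Polynomial.aeval_apply_smul_mem_of_le_comap hv _ _ hp
  · exact Module.End.mem_eigenspace_iff.mp (hm μ)

variable {D : Datum F}

noncomputable def Dopₗ (D : Datum F) (p : Fin 4) : Module.End F (Alg D) :=
  Finsupp.linearCombination F (Dmon D p) ∘ₗ (AddMonoidAlgebra.coeffLinearEquiv F).toLinearMap

theorem Dopₗ_apply (p : Fin 4) (u : Alg D) : Dopₗ D p u = Dop D p u :=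
  Finsupp.linearCombination_apply F u.coeff

theorem Dop_X (p : Fin 4) (g : ↥D.Γ × ↥(Jmon D.m)) : Dop D p (X D g) = Dmon D p g := by
  rw [Dop, X, AddMonoidAlgebra.coeff_single, Finsupp.sum_single_index (zero_smul F (Dmon D p g)),
    one_smul]

theorem Dop_one (p : Fin 4) : Dop D p (1 : Alg D) = 0 := by
  rw [AddMonoidAlgebra.one_def, ← X, Dop_X, Dmon]
  simp

theorem br_one (v : Alg D) : br D 1 v = Dop D 3 v := by
  simp [br, Dop_one]

theorem Dop_mem_Bspan (v : Alg D) : Dop D 3 v ∈ Bspan D :=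
  Submodule.subset_span ⟨1, v, (br_one v).symm⟩

theorem span_range_X : Submodule.span F (Set.range (X D)) = ⊤ := by
  refine Submodule.eq_top_iff'.mpr fun v => ?_
  induction v using AddMonoidAlgebra.induction_linear with
  | zero => exact zero_mem _
  | add u v hu hv => exact add_mem hu hv
  | single g r =>
    rw [← mul_one r, ← AddMonoidAlgebra.smul_single', ← X]
    exact Submodule.smul_mem _ r (Submodule.subset_span ⟨g, rfl⟩)

theorem Dop_X_of_m_eq_false {p : Fin 4} (hp : D.m p = false) (g : ↥D.Γ × ↥(Jmon D.m)) :
    Dop D p (X D g) = g.1.1 p • X D g := by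
  rw [Dop_X, Dmon, g.2.2 p hp, Nat.cast_zero, zero_smul, add_zero]

theorem iSup_eigenspace_Dopₗ_eq_top {p : Fin 4} (hp : D.m p = false) :
    ⨆ μ, (Dopₗ D p).eigenspace μ = ⊤ := by
  rw [eq_top_iff, ← span_range_X, Submodule.span_le]
  rintro _ ⟨g, rfl⟩
  refine Submodule.mem_iSup_of_mem (g.1.1 p) (Module.End.mem_eigenspace_iff.mpr ?_)
  rw [Dopₗ_apply, Dop_X_of_m_eq_false hp]

def Jmon.single {m : Fin 4 → Bool} {p : Fin 4} (hp : m p = true) : ↥(Jmon m) :=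
  ⟨Pi.single p 1, fun q hq => Pi.single_eq_of_ne (by rintro rfl; simp [hp] at hq) 1⟩

section

variable {m : Fin 4 → Bool} {p : Fin 4} (hp : m p = true)

theorem Jmon.add_single_apply_self (j : ↥(Jmon m)) : (j + Jmon.single hp).1 p = j.1 p + 1 := by
  simp [Jmon.single]

theorem subE_add_single (j : ↥(Jmon m)) : subE (j + Jmon.single hp) p = j := by
  ext q
  simp [subE, Jmon.single]

theorem subE_add_single_of_ne_zero {j : ↥(Jmon m)} (hj : j.1 p ≠ 0) :
    subE j p + Jmon.single hp = j := by
  ext q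
  rcases eq_or_ne q p with rfl | hq
  · simp [subE, Jmon.single]
    omega
  · simp [subE, Jmon.single, Pi.single_eq_of_ne hq]

end

section

variable {p : Fin 4}

open scoped Classical in
theorem coeff_Dmon (hp : D.m p = true) (h g : ↥D.Γ × ↥(Jmon D.m)) :
    (Dmon D p h).coeff g = (if h = g then g.1.1 p else 0)
      + if h = (g.1, g.2 + Jmon.single hp) then (g.2.1 p + 1 : F) else 0 := by
  simp only [Dmon, X, AddMonoidAlgebra.coeff_add, AddMonoidAlgebra.coeff_smul,
    AddMonoidAlgebra.coeff_single, Finsupp.add_apply, Finsupp.smul_apply, Finsupp.single_apply,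
    smul_eq_mul, mul_ite, mul_one, mul_zero]
  congr 1
  · split_ifs <;> simp_all
  · by_cases hup : h = (g.1, g.2 + Jmon.single hp)
    · subst hup
      simp [subE_add_single, Jmon.add_single_apply_self]
    · rw [if_neg hup, ite_eq_right_iff]
      rintro rfl
      by_contra hj
      exact hup (Prod.ext rfl
        (subE_add_single_of_ne_zero hp fun h0 => hj (by rw [h0, Nat.cast_zero])).symm)

theorem coeff_Dop (hp : D.m p = true) (v : Alg D) (g : ↥D.Γ × ↥(Jmon D.m)) :
    (Dop D p v).coeff g
      = g.1.1 p * v.coeff g + (g.2.1 p + 1 : F) * v.coeff (g.1, g.2 + Jmon.single hp) := by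
  classical
  rw [← Dopₗ_apply]
  induction v using AddMonoidAlgebra.induction_linear with
  | zero => simp
  | add u w hu hw =>
    simp only [map_add, AddMonoidAlgebra.coeff_add, Finsupp.add_apply, hu, hw]
    ring
  | single h r =>
    rw [← mul_one r, ← AddMonoidAlgebra.smul_single', ← X, map_smul, Dopₗ_apply, Dop_X]
    simp only [AddMonoidAlgebra.coeff_smul, Finsupp.smul_apply, coeff_Dmon hp, X,
      AddMonoidAlgebra.coeff_single, Finsupp.single_apply, smul_eq_mul]
    split_ifs <;> ring

theorem coeff_Dop_X_add_single (hp : D.m p = true) (g : ↥D.Γ × ↥(Jmon D.m)) :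
    (Dop D p (X D (g.1, g.2 + Jmon.single hp))).coeff g = g.2.1 p + 1 := by
  have hne : ((g.1, g.2 + Jmon.single hp) : ↥D.Γ × ↥(Jmon D.m)) ≠ g := fun h => by
    simpa [Jmon.add_single_apply_self] using congrArg (fun k => k.2.1 p) h
  simp [coeff_Dop hp, X, hne]

theorem coeff_eq_zero_of_Dop_eq_smul [CharZero F] (hp : D.m p = true) {v : Alg D} {c : F}
    (hv : Dop D p v = c • v) {g : ↥D.Γ × ↥(Jmon D.m)} (hg : g.2.1 p ≠ 0) : v.coeff g = 0 := by
  have heigen : ∀ k, (k.1.1 p - c) * v.coeff k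
      + (k.2.1 p + 1 : F) * v.coeff (k.1, k.2 + Jmon.single hp) = 0 := fun k => by
    have := congrArg (fun w : Alg D => w.coeff k) hv
    simp only [coeff_Dop hp, AddMonoidAlgebra.coeff_smul, Finsupp.smul_apply, smul_eq_mul] at this
    linear_combination this
  by_contra hvg
  obtain ⟨g₀, hg₀, hmax⟩ := v.coeff.support.exists_max_image (fun k => k.2.1 p)
    ⟨g, Finsupp.mem_support_iff.mpr hvg⟩
  have hg₀p : g₀.2.1 p ≠ 0 := by
    have := hmax g (Finsupp.mem_support_iff.mpr hvg)
    omega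
  have hc : c = g₀.1.1 p := by
    have hup : v.coeff (g₀.1, g₀.2 + Jmon.single hp) = 0 := by
      by_contra h
      have := hmax _ (Finsupp.mem_support_iff.mpr h)
      simp only [Jmon.add_single_apply_self] at this
      omega
    have := heigen g₀
    rw [hup, mul_zero, add_zero] at this
    exact (sub_eq_zero.mp ((mul_eq_zero.mp this).resolve_right
      (Finsupp.mem_support_iff.mp hg₀))).symm
  have := heigen (g₀.1, subE g₀.2 p)
  rw [subE_add_single_of_ne_zero hp hg₀p, hc, sub_self, zero_mul, zero_add] at this
  exact Finsupp.mem_support_iff.mp hg₀ ((mul_eq_zero.mp this).resolve_left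
    (Nat.cast_add_one_ne_zero _))

theorem coeff_eq_zero_of_mem_span_eigenvectors [CharZero F] (hp : D.m p = true) {v : Alg D}
    (hv : v ∈ Submodule.span F {w | ∃ c : F, Dop D p w = c • w})
    {g : ↥D.Γ × ↥(Jmon D.m)} (hg : g.2.1 p ≠ 0) : v.coeff g = 0 := by
  induction hv using Submodule.span_induction with
  | mem w hw => exact coeff_eq_zero_of_Dop_eq_smul hp hw.choose_spec hg
  | zero => rfl
  | add u w _ _ hu hw => simp [AddMonoidAlgebra.coeff_add, hu, hw]
  | smul r u _ hu => simp [AddMonoidAlgebra.coeff_smul, hu]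

end

/-- `ad_1` is a semisimple operator on `B` (i.e. `B` is spanned by
eigenvectors of `ad_1`) if and only if `J₄ = {0}`. -/
theorem ad_one_semisimple_iff (F : Type*) [Field F] [CharZero F] (D : Datum F) :
    (Bspan D ≤ Submodule.span F
        {v : Alg D | v ∈ Bspan D ∧ ∃ c : F, br D (1 : Alg D) v = c • v})
      ↔ D.m 3 = false := by
  simp only [br_one]
  constructor
  · intro hle
    by_contra hJ
    rw [Bool.not_eq_false] at hJ
    set g : ↥D.Γ × ↥(Jmon D.m) := (0, Jmon.single hJ)
    have hw := Submodule.span_mono (fun w hw => hw.2)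
      (hle (Dop_mem_Bspan (X D (g.1, g.2 + Jmon.single hJ))))
    have hzero := coeff_eq_zero_of_mem_span_eigenvectors hJ hw (g := g) (by simp [g, Jmon.single])
    rw [coeff_Dop_X_add_single hJ] at hzero
    exact Nat.cast_add_one_ne_zero _ hzero
  · intro hJ
    simp only [← Dopₗ_apply]
    exact le_span_eigenvectors_of_iSup_eigenspace_eq_top
      (fun v _ => Dopₗ_apply 3 v ▸ Dop_mem_Bspan v) (iSup_eigenspace_Dopₗ_eq_top hJ)

end SuBlock
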